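/- arXiv:2206.09182 — 2 statements merged into one kernel-verified Lean document; each statement's English description precedes it below -/
import Mathlib

section
/- Fix R > 0 and ε > 0, and let ĥₙ be the majority over n i.i.d. realizations of the randomized classifier ĥ that classifies f_R(x) = sgn(‖x‖₂ − R) in probability with a probability function p(x) = Pr[ĥ(x)=1] that is a continuous strictly increasing function of ‖x‖₂ with p = 1/2 at ‖x‖₂ = R. Let μ be any probability distribution on R^d assigning zero mass to the sphere {‖x‖₂ = R}. Then there exists n ∈ ℕ such that E[‖f_R − ĥₙ‖²_{L²(μ)}] ≤ ε. -/
/-!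
For a fixed `x` off the sphere, the votes `H i · x` are i.i.d. `±1`-valued with mean
`2 g(‖x‖) - 1`, which is nonzero and has the sign of `‖x‖ - R` because `g` is strictly
increasing with `g(R) = 1/2`. By the strong law of large numbers the sign of the vote sum
therefore agrees with `sgn(‖x‖ - R)` almost surely for all large `n`, so the expected squared
error at `x` tends to `0` by bounded convergence. Since `μ` does not charge the sphere, bounded
convergence in `x` and Fubini give the claim.
-/

open MeasureTheory ProbabilityTheory

/-- The Euclidean norm on `Fin d → ℝ`. -/
noncomputable def enorm' (d : ℕ) (x : Fin d → ℝ) : ℝ := Real.sqrt (∑ i, (x i) ^ 2)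

open Filter Topology

namespace Real

lemma measurable_sign : Measurable Real.sign :=
  Measurable.ite (measurableSet_lt measurable_id measurable_const) measurable_const
    (Measurable.ite (measurableSet_lt measurable_const measurable_id) measurable_const
      measurable_const)

lemma sq_sign_sub_sign_le (a b : ℝ) : (sign a - sign b) ^ 2 ≤ 4 := by
  rcases sign_apply_eq a with ha | ha | ha <;> rcases sign_apply_eq b with hb | hb | hb <;>
    norm_num [ha, hb]

lemma sign_mul_of_pos {c : ℝ} (hc : 0 < c) (a : ℝ) : sign (c * a) = sign a := by
  rcases lt_trichotomy a 0 with ha | rfl | ha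
  · rw [sign_of_neg ha, sign_of_neg (mul_neg_of_pos_of_neg hc ha)]
  · rw [mul_zero]
  · rw [sign_of_pos ha, sign_of_pos (mul_pos hc ha)]

lemma eventually_sign_eq {m : ℝ} (hm : m ≠ 0) : ∀ᶠ y in 𝓝 m, sign y = sign m := by
  rcases hm.lt_or_gt with hm | hm
  · filter_upwards [eventually_lt_nhds hm] with y hy
    rw [sign_of_neg hy, sign_of_neg hm]
  · filter_upwards [eventually_gt_nhds hm] with y hy
    rw [sign_of_pos hy, sign_of_pos hm]

lemma eventually_sign_sum_eq_of_tendsto_average {x : ℕ → ℝ} {m : ℝ} (hm : m ≠ 0)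
    (hx : Tendsto (fun n : ℕ ↦ (n : ℝ)⁻¹ • ∑ i ∈ Finset.range n, x i) atTop (𝓝 m)) :
    ∀ᶠ n in atTop, sign (∑ i ∈ Finset.range n, x i) = sign m := by
  filter_upwards [hx.eventually (eventually_sign_eq hm), eventually_gt_atTop 0] with n hn hn0
  rwa [smul_eq_mul, sign_mul_of_pos (by positivity)] at hn

end Real

section PlusMinusOne

variable {Ω Ω' : Type*} [MeasurableSpace Ω] [MeasurableSpace Ω'] {P : Measure Ω} {Q : Measure Ω'}
  [IsProbabilityMeasure P] [IsProbabilityMeasure Q] {X : Ω → ℝ} {Y : Ω' → ℝ}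

lemma map_eq_of_forall_eq_one_or_eq_neg_one (hX : Measurable X)
    (hv : ∀ ω, X ω = 1 ∨ X ω = -1) :
    P.map X = P {ω | X ω = 1} • Measure.dirac 1
      + (1 - P {ω | X ω = 1}) • Measure.dirac (-1) := by
  ext s hs
  have hA : MeasurableSet {ω | X ω = 1} := hX (measurableSet_singleton 1)
  have h_pre : ∀ t : Set Ω, (∀ ω, X ω ∈ s ↔ ω ∈ t) → P (X ⁻¹' s) = P t :=
    fun t ht ↦ congrArg P (Set.ext ht)
  rw [Measure.map_apply hX hs]
  by_cases h1 : (1 : ℝ) ∈ s <;> by_cases h2 : (-1 : ℝ) ∈ s <;>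
    simp only [Measure.coe_add, Measure.coe_smul, Pi.add_apply, Pi.smul_apply,
      Measure.dirac_apply' _ hs, h1, h2, Set.indicator_of_mem, Set.indicator_of_notMem,
      Pi.one_apply, smul_eq_mul, mul_one, mul_zero, add_zero, zero_add, not_false_eq_true]
  · rw [h_pre Set.univ, measure_univ, add_tsub_cancel_of_le prob_le_one]
    intro ω; rcases hv ω with h | h <;> norm_num [h, h1, h2]
  · rw [h_pre {ω | X ω = 1}]
    intro ω; rcases hv ω with h | h <;> norm_num [h, h1, h2]
  · rw [h_pre {ω | X ω = 1}ᶜ, prob_compl_eq_one_sub hA]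
    intro ω; rcases hv ω with h | h <;> norm_num [h, h1, h2]
  · rw [h_pre ∅, measure_empty]
    intro ω; rcases hv ω with h | h <;> norm_num [h, h1, h2]

lemma identDistrib_of_forall_eq_one_or_eq_neg_one (hX : Measurable X) (hY : Measurable Y)
    (hXv : ∀ ω, X ω = 1 ∨ X ω = -1) (hYv : ∀ ω, Y ω = 1 ∨ Y ω = -1)
    (h : P {ω | X ω = 1} = Q {ω | Y ω = 1}) : IdentDistrib X Y P Q where
  aemeasurable_fst := hX.aemeasurable
  aemeasurable_snd := hY.aemeasurable
  map_eq := by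
    rw [map_eq_of_forall_eq_one_or_eq_neg_one hX hXv, map_eq_of_forall_eq_one_or_eq_neg_one hY hYv,
      h]

lemma integral_eq_two_mul_measureReal_sub_one (hX : Measurable X)
    (hv : ∀ ω, X ω = 1 ∨ X ω = -1) : ∫ ω, X ω ∂P = 2 * P.real {ω | X ω = 1} - 1 := by
  have hA : MeasurableSet {ω | X ω = 1} := hX (measurableSet_singleton 1)
  calc ∫ ω, X ω ∂P = ∫ ω, (2 * {ω | X ω = 1}.indicator 1 ω - 1) ∂P := by
        congr 1; ext ω; rcases hv ω with h | h <;> norm_num [h]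
    _ = 2 * P.real {ω | X ω = 1} - 1 := by
        rw [integral_sub (((integrable_const 1).indicator hA).const_mul 2) (integrable_const 1),
          integral_const_mul, integral_indicator_one hA]
        simp only [integral_const, probReal_univ, smul_eq_mul, mul_one]

end PlusMinusOne

section MajorityVote

variable {Ω : Type*} [MeasurableSpace Ω] {P : Measure Ω} [IsProbabilityMeasure P]
  {X : ℕ → Ω → ℝ}

theorem ae_eventually_sign_sum_eq (hXm : ∀ i, Measurable (X i))
    (hv : ∀ i ω, X i ω = 1 ∨ X i ω = -1)
    (hindep : Pairwise (Function.onFun (IndepFun · · P) X))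
    (hident : ∀ i, P {ω | X i ω = 1} = P {ω | X 0 ω = 1})
    (hp : 2 * P.real {ω | X 0 ω = 1} - 1 ≠ 0) :
    ∀ᵐ ω ∂P, ∀ᶠ n in atTop,
      Real.sign (∑ i ∈ Finset.range n, X i ω) = Real.sign (2 * P.real {ω | X 0 ω = 1} - 1) := by
  have h_int : Integrable (X 0) P := by
    refine (integrable_const (1 : ℝ)).mono' (hXm 0).aestronglyMeasurable (.of_forall fun ω ↦ ?_)
    rcases hv 0 ω with h | h <;> norm_num [h]
  have h_slln := strong_law_ae X h_int hindep fun i ↦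
    identDistrib_of_forall_eq_one_or_eq_neg_one (hXm i) (hXm 0) (hv i) (hv 0) (hident i)
  rw [integral_eq_two_mul_measureReal_sub_one (hXm 0) (hv 0)] at h_slln
  filter_upwards [h_slln] with ω hω
  exact Real.eventually_sign_sum_eq_of_tendsto_average hp hω

lemma tendsto_integral_sq_sign_sub_sign {Y : ℕ → Ω → ℝ} (hY : ∀ n, Measurable (Y n)) (a : ℝ)
    (h : ∀ᵐ ω ∂P, ∀ᶠ n in atTop, Real.sign (Y n ω) = Real.sign a) :
    Tendsto (fun n ↦ ∫ ω, (Real.sign a - Real.sign (Y n ω)) ^ 2 ∂P) atTop (𝓝 0) := by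
  have h_lim := tendsto_integral_filter_of_norm_le_const (μ := P)
    (F := fun n ω ↦ (Real.sign a - Real.sign (Y n ω)) ^ 2) (f := 0)
    (.of_forall fun n ↦ ((measurable_const.sub (Real.measurable_sign.comp (hY n))).pow_const
      2).aestronglyMeasurable)
    ⟨4, .of_forall fun n ↦ .of_forall fun ω ↦ by
      rw [Real.norm_of_nonneg (sq_nonneg _)]; exact Real.sq_sign_sub_sign_le _ _⟩
    (by
      filter_upwards [h] with ω hω
      exact tendsto_const_nhds.congr' (by filter_upwards [hω] with n hn; simp [hn]))
  simpa using h_lim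

theorem tendsto_integral_sq_sign_sub_sign_sum (hXm : ∀ i, Measurable (X i))
    (hv : ∀ i ω, X i ω = 1 ∨ X i ω = -1)
    (hindep : Pairwise (Function.onFun (IndepFun · · P) X))
    (hident : ∀ i, P {ω | X i ω = 1} = P {ω | X 0 ω = 1}) {a : ℝ} (ha : a ≠ 0)
    (h_sign : Real.sign (2 * P.real {ω | X 0 ω = 1} - 1) = Real.sign a) :
    Tendsto (fun n ↦ ∫ ω, (Real.sign a - Real.sign (∑ i ∈ Finset.range n, X i ω)) ^ 2 ∂P)
      atTop (𝓝 0) := by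
  have hp : 2 * P.real {ω | X 0 ω = 1} - 1 ≠ 0 := fun h0 ↦
    ha <| Real.sign_eq_zero_iff.mp <| by rw [← h_sign, h0, Real.sign_zero]
  refine tendsto_integral_sq_sign_sub_sign (fun n ↦ Finset.measurable_sum _ fun i _ ↦ hXm i) a ?_
  rw [← h_sign]
  exact ae_eventually_sign_sum_eq hXm hv hindep hident hp

end MajorityVote

lemma tendsto_integral_integral_of_ae_tendsto {α β : Type*} [MeasurableSpace α]
    [MeasurableSpace β] {P : Measure α} {μ : Measure β} [IsFiniteMeasure P] [IsFiniteMeasure μ]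
    {F : ℕ → α × β → ℝ} (hF : ∀ n, Measurable (F n)) {C : ℝ} (hC : ∀ n q, ‖F n q‖ ≤ C)
    (h_lim : ∀ᵐ y ∂μ, Tendsto (fun n ↦ ∫ x, F n (x, y) ∂P) atTop (𝓝 0)) :
    Tendsto (fun n ↦ ∫ x, ∫ y, F n (x, y) ∂μ ∂P) atTop (𝓝 0) := by
  have h_swap : ∀ n, ∫ x, ∫ y, F n (x, y) ∂μ ∂P = ∫ y, ∫ x, F n (x, y) ∂P ∂μ := fun n ↦
    integral_integral_swap <|
      (integrable_const C).mono' (hF n).aestronglyMeasurable (.of_forall (hC n))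
  simp_rw [h_swap]
  simpa only [integral_zero] using tendsto_integral_filter_of_norm_le_const (f := fun _ ↦ 0)
    (.of_forall fun n ↦ (hF n).stronglyMeasurable.integral_prod_left'.aestronglyMeasurable)
    ⟨C * P.real Set.univ, .of_forall fun n ↦ .of_forall fun y ↦
      norm_integral_le_of_norm_le_const (.of_forall fun x ↦ hC n (x, y))⟩ h_lim

lemma sign_two_mul_toReal_ofReal_sub_one_eq_sign_sub {g : ℝ → ℝ} {R r : ℝ}
    (hgm : StrictMonoOn g (Set.Ici 0)) (hgR : g R = 1 / 2) (hR : 0 ≤ R) (hr : 0 ≤ r)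
    (hrR : r ≠ R) :
    Real.sign (2 * (ENNReal.ofReal (g r)).toReal - 1) = Real.sign (r - R) := by
  rw [ENNReal.toReal_ofReal']
  rcases hrR.lt_or_gt with h | h
  · have hg : g r < 1 / 2 := hgR ▸ hgm hr hR h
    rw [Real.sign_of_neg (by linarith [max_lt hg one_half_pos]), Real.sign_of_neg (by linarith)]
  · have hg : 1 / 2 < g r := hgR ▸ hgm hR hr h
    rw [Real.sign_of_pos (by linarith [le_max_left (g r) 0]), Real.sign_of_pos (by linarith)]

lemma continuous_enorm' (d : ℕ) : Continuous (enorm' d) := by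
  unfold enorm'; fun_prop

theorem stmt7_general {Ω : Type*} [MeasurableSpace Ω] (P : Measure Ω) [IsProbabilityMeasure P]
    (d : ℕ) (R ε : ℝ) (hR : 0 < R) (hε : 0 < ε)
    (μ : Measure (Fin d → ℝ)) [IsProbabilityMeasure μ]
    (hsphere : μ {x | enorm' d x = R} = 0)
    (g : ℝ → ℝ) (hgm : StrictMonoOn g (Set.Ici 0))
    (hgR : g R = 1/2)
    (H : ℕ → Ω → (Fin d → ℝ) → ℝ)
    (hjm : ∀ i, Measurable fun q : Ω × (Fin d → ℝ) => H i q.1 q.2)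
    (hval : ∀ i ω x, H i ω x = 1 ∨ H i ω x = -1)
    (hdist : ∀ i x, P {ω | H i ω x = 1} = ENNReal.ofReal (g (enorm' d x)))
    (hindep : ∀ x, iIndepFun (fun i ω => H i ω x) P) :
    ∃ n : ℕ,
      (∫ ω, ∫ x,
        (Real.sign (enorm' d x - R)
          - Real.sign (∑ i ∈ Finset.range n, H i ω x)) ^ 2 ∂μ ∂P) ≤ ε := by
  set F : ℕ → Ω × (Fin d → ℝ) → ℝ := fun n q ↦
    (Real.sign (enorm' d q.2 - R) - Real.sign (∑ i ∈ Finset.range n, H i q.1 q.2)) ^ 2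
  have hF_meas : ∀ n, Measurable (F n) := fun n ↦
    ((Real.measurable_sign.comp (((continuous_enorm' d).measurable.comp measurable_snd).sub
      measurable_const)).sub
      (Real.measurable_sign.comp (Finset.measurable_sum _ fun i _ ↦ hjm i))).pow_const 2
  have hF_le : ∀ n q, ‖F n q‖ ≤ 4 := fun n q ↦ by
    rw [Real.norm_of_nonneg (sq_nonneg _)]; exact Real.sq_sign_sub_sign_le _ _
  have h_inner : ∀ᵐ x ∂μ, Tendsto (fun n ↦ ∫ ω, F n (ω, x) ∂P) atTop (𝓝 0) := by
    filter_upwards [measure_eq_zero_iff_ae_notMem.mp hsphere] with x hx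
    have h_sign : Real.sign (2 * P.real {ω | H 0 ω x = 1} - 1) = Real.sign (enorm' d x - R) := by
      rw [Measure.real, hdist]
      exact sign_two_mul_toReal_ofReal_sub_one_eq_sign_sub hgm hgR hR.le (Real.sqrt_nonneg _) hx
    exact tendsto_integral_sq_sign_sub_sign_sum (X := fun i ω ↦ H i ω x) (a := enorm' d x - R)
      (fun i ↦ (hjm i).comp measurable_prodMk_right)
      (fun i ω ↦ hval i ω x) (fun i j hij ↦ (hindep x).indepFun hij)
      (fun i ↦ by rw [hdist, hdist]) (sub_ne_zero.mpr hx) h_sign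
  exact ((tendsto_integral_integral_of_ae_tendsto hF_meas hF_le h_inner).eventually
    (ge_mem_nhds hε)).exists

/-- Fix `R > 0`, `ε > 0`. Let `ĥ` be a randomized `{−1,1}`-classifier whose probability of
outputting `1` is `g(‖x‖₂)` where `g` is continuous, strictly increasing on `[0,∞)` with
values in `[0,1]` and `g(R) = 1/2` (so `ĥ` classifies `f_R(x) = sgn(‖x‖₂ − R)` in
probability).  Let `ĥₙ` be the majority of `n` i.i.d. realizations `H 0, …, H (n−1)`.
For any probability measure `μ` on `ℝ^d` assigning zero mass to the sphere `{‖x‖₂ = R}`,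
there exists `n` with `E[‖f_R − ĥₙ‖²_{L²(μ)}] ≤ ε`. -/
theorem stmt7 {Ω : Type*} [MeasurableSpace Ω] (P : Measure Ω) [IsProbabilityMeasure P]
    (d : ℕ) (R ε : ℝ) (hR : 0 < R) (hε : 0 < ε)
    (μ : Measure (Fin d → ℝ)) [IsProbabilityMeasure μ]
    (hsphere : μ {x | enorm' d x = R} = 0)
    (g : ℝ → ℝ) (hgc : Continuous g) (hgm : StrictMonoOn g (Set.Ici 0))
    (hg01 : ∀ r, g r ∈ Set.Icc (0 : ℝ) 1) (hgR : g R = 1/2)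
    (H : ℕ → Ω → (Fin d → ℝ) → ℝ)
    (hjm : ∀ i, Measurable fun q : Ω × (Fin d → ℝ) => H i q.1 q.2)
    (hval : ∀ i ω x, H i ω x = 1 ∨ H i ω x = -1)
    (hdist : ∀ i x, P {ω | H i ω x = 1} = ENNReal.ofReal (g (enorm' d x)))
    (hindep : ∀ x, iIndepFun (fun i ω => H i ω x) P) :
    ∃ n : ℕ,
      (∫ ω, ∫ x,
        (Real.sign (enorm' d x - R)
          - Real.sign (∑ i ∈ Finset.range n, H i ω x)) ^ 2 ∂μ ∂P) ≤ ε :=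
  stmt7_general P d R ε hR hε μ hsphere g hgm hgR H hjm hval hdist hindep
end

section
/- Let f : R → R be K-Lipschitz and let ζ be a probability distribution on R with full support. Define a random linear classifier h by: sample t ∼ ζ, set p = (t, f(t)), then choose between the two slope-±K lines through p with equal probability. Then for every q = (x, y) with y > f(x), Pr[h(q) = 1] > 1/2, and similarly Pr[h(q) = −1] > 1/2 whenever y < f(x). That is, this distribution of linear classifiers separates f in probability. -/
/-!
Write `A` (resp. `B`) for the set of anchors `t` at which the line of slope `-K` (resp. `+K`)
through `(t, f t)` classifies `q = (x, y)` correctly. By `K`-Lipschitzness every anchor lies in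
`A` or in `B`: for `t ≤ x` the `-K` line lies below the graph at `x`, and for `t ≥ x` the `+K`
line does. Both sets are open and contain `x`, so by full support `ζ (A ∩ B) > 0`, and the
success probability `(ζ A + ζ B) / 2 = (1 + ζ (A ∩ B)) / 2` exceeds `1/2`.
-/

open MeasureTheory ENNReal Set

lemma Real.sign_eq_one_iff {r : ℝ} : Real.sign r = 1 ↔ 0 < r := by
  unfold Real.sign
  split_ifs <;> norm_num <;> linarith

lemma Real.sign_eq_neg_one_iff {r : ℝ} : Real.sign r = -1 ↔ r < 0 := by
  unfold Real.sign
  split_ifs <;> norm_num <;> linarith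

lemma LipschitzWith.apply_sub_mul_lt_or_apply_add_mul_lt {K : NNReal} {f : ℝ → ℝ}
    (hf : LipschitzWith K f) {x y : ℝ} (hxy : f x < y) (t : ℝ) :
    f t - K * (x - t) < y ∨ f t + K * (x - t) < y := by
  have hdist := hf.dist_le_mul t x
  rw [Real.dist_eq, Real.dist_eq] at hdist
  rcases le_total x t with hxt | htx
  · right
    rw [abs_of_nonneg (sub_nonneg.2 hxt)] at hdist
    linarith [(abs_le.1 hdist).2]
  · left
    rw [abs_of_nonpos (sub_nonpos.2 htx)] at hdist
    linarith [(abs_le.1 hdist).2]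

namespace MeasureTheory.Measure

variable {α : Type*} [MeasurableSpace α]

lemma isOpenPosMeasure_of_measure_Ioo_pos [TopologicalSpace α] [LinearOrder α] [OrderTopology α]
    [NoMaxOrder α] [NoMinOrder α] (μ : Measure α) (hμ : ∀ a b, a < b → 0 < μ (Ioo a b)) :
    μ.IsOpenPosMeasure := by
  refine ⟨fun U hU ⟨x, hx⟩ => ?_⟩
  obtain ⟨l, u, hlu, hsub⟩ := mem_nhds_iff_exists_Ioo_subset.1 (hU.mem_nhds hx)
  exact ((hμ l u (hlu.1.trans hlu.2)).trans_le (measure_mono hsub)).ne'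

variable (ζ : Measure α)

lemma prod_uniformOfFintype_bool_ite_mem [SFinite ζ] {A B : Set α} (hB : MeasurableSet B) :
    (ζ.prod (PMF.uniformOfFintype Bool).toMeasure) {p | if p.2 then p.1 ∈ A else p.1 ∈ B}
      = (ζ A + ζ B) / 2 := by
  have hset : {p : α × Bool | if p.2 then p.1 ∈ A else p.1 ∈ B}
      = A ×ˢ {true} ∪ B ×ˢ {false} := by
    ext ⟨a, c⟩
    cases c <;> simp
  have hdisj : Disjoint (A ×ˢ ({true} : Set Bool)) (B ×ˢ {false}) :=
    disjoint_prod.2 (Or.inr (by simp))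
  have hcoin (c : Bool) : (PMF.uniformOfFintype Bool).toMeasure {c} = 2⁻¹ := by
    simp [PMF.toMeasure_apply_singleton _ _ (measurableSet_singleton c)]
  rw [hset, measure_union hdisj (hB.prod (measurableSet_singleton _)), prod_prod, prod_prod,
    hcoin, hcoin, ← add_mul, div_eq_mul_inv]

lemma one_lt_add_of_union_eq_univ [IsProbabilityMeasure ζ] {A B : Set α} (hB : MeasurableSet B)
    (hcover : A ∪ B = univ) (hpos : 0 < ζ (A ∩ B)) : 1 < ζ A + ζ B := by
  rw [← measure_union_add_inter A hB, hcover, measure_univ]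
  exact ENNReal.lt_add_right one_ne_top hpos.ne'

lemma half_lt_prod_uniformOfFintype_bool_of_isOpen [TopologicalSpace α] [OpensMeasurableSpace α]
    [IsProbabilityMeasure ζ] [ζ.IsOpenPosMeasure] {A B : Set α} (hA : IsOpen A) (hB : IsOpen B)
    (hcover : A ∪ B = univ) (hAB : (A ∩ B).Nonempty) :
    1 / 2 < (ζ.prod (PMF.uniformOfFintype Bool).toMeasure)
      {p | if p.2 then p.1 ∈ A else p.1 ∈ B} := by
  rw [prod_uniformOfFintype_bool_ite_mem ζ hB.measurableSet]
  exact ENNReal.div_lt_div_right two_ne_zero ofNat_ne_top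
    (one_lt_add_of_union_eq_univ ζ hB.measurableSet hcover ((hA.inter hB).measure_pos ζ hAB))

end MeasureTheory.Measure

/-- Let `f : ℝ → ℝ` be `K`-Lipschitz and `ζ` a probability distribution on `ℝ` with full
support.  Sample `t ∼ ζ`, set `p = (t, f t)`, and choose with equal probability one of the
two lines of slope `±K` through `p` as a linear classifier `h`.  Then for every
`q = (x,y)` with `y > f x`, `Pr[h(q) = 1] > 1/2`, and for `y < f x`,
`Pr[h(q) = −1] > 1/2`: this distribution of linear classifiers separates `f` in
probability. -/
theorem stmt13 (K : ℝ) (hK : 0 ≤ K) (f : ℝ → ℝ)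
    (hf : ∀ a b : ℝ, |f a - f b| ≤ K * |a - b|)
    (ζ : Measure ℝ) [IsProbabilityMeasure ζ]
    (hfull : ∀ a b : ℝ, a < b → 0 < ζ (Set.Ioo a b)) :
    ∀ x y : ℝ,
      (f x < y →
        1/2 < (ζ.prod (PMF.uniformOfFintype Bool).toMeasure)
          {tc : ℝ × Bool |
            (if tc.2 then Real.sign (K * x + y - (K * tc.1 + f tc.1))
              else Real.sign (-K * x + y - (-K * tc.1 + f tc.1))) = 1}) ∧
      (y < f x →
        1/2 < (ζ.prod (PMF.uniformOfFintype Bool).toMeasure)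
          {tc : ℝ × Bool |
            (if tc.2 then Real.sign (K * x + y - (K * tc.1 + f tc.1))
              else Real.sign (-K * x + y - (-K * tc.1 + f tc.1))) = -1}) := by
  have hL : LipschitzWith ⟨K, hK⟩ f :=
    LipschitzWith.of_dist_le_mul fun a b => by rw [Real.dist_eq, Real.dist_eq]; exact hf a b
  have hfc : Continuous f := hL.continuous
  have := Measure.isOpenPosMeasure_of_measure_Ioo_pos ζ hfull
  intro x y
  constructor
  · intro hxy
    convert Measure.half_lt_prod_uniformOfFintype_bool_of_isOpen ζ
      (A := {t | f t - K * (x - t) < y}) (B := {t | f t + K * (x - t) < y})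
      (isOpen_lt (by fun_prop) continuous_const) (isOpen_lt (by fun_prop) continuous_const)
      (eq_univ_of_forall (hL.apply_sub_mul_lt_or_apply_add_mul_lt hxy))
      ⟨x, by simpa using hxy, by simpa using hxy⟩ using 2
    ext ⟨t, c⟩
    cases c <;> simp only [Real.sign_eq_one_iff, mem_ofPred_eq, mul_sub, neg_mul, if_true,
      if_false, Bool.false_eq_true] <;> constructor <;> intro <;> linarith
  · intro hxy
    -- Reflecting in the horizontal axis (`f, y ↦ -f, -y`) swaps the two slopes.
    convert Measure.half_lt_prod_uniformOfFintype_bool_of_isOpen ζ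
      (A := {t | -f t + K * (x - t) < -y}) (B := {t | -f t - K * (x - t) < -y})
      (isOpen_lt (by fun_prop) continuous_const) (isOpen_lt (by fun_prop) continuous_const)
      (eq_univ_of_forall fun t =>
        (hL.neg.apply_sub_mul_lt_or_apply_add_mul_lt (neg_lt_neg hxy) t).symm)
      ⟨x, by simpa using hxy, by simpa using hxy⟩ using 2
    ext ⟨t, c⟩
    cases c <;> simp only [Real.sign_eq_neg_one_iff, mem_ofPred_eq, mul_sub, neg_mul, if_true,
      if_false, Bool.false_eq_true] <;> constructor <;> intro <;> linarith
end
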